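/- Splitting formula: Let g be a symmetric integrable kernel on T^d and V admissible, with equilibrium measure μ_∞ minimizing E_V(μ) = ∬ g(x−y) dμ⊗μ + ∫ V dμ, satisfying the first-order condition 2h(μ_∞) + V − c_∞ = ζ_∞ ≥ 0 with equality on the support. Then for every pairwise-distinct configuration X_N = (x_1,…,x_N) ∈ T^{d×N}, the Hamiltonian H_N(X_N) = Σ_{i≠j} g(x_i−x_j) + N Σ_i V(x_i) satisfies H_N(X_N) = N²( E_V(μ_∞) + F_N(X_N, μ_∞) + ∫ ζ_∞ d emp_N ), where emp_N = (1/N)Σ_i δ_{x_i} and F_N(X_N, μ) = ∬_{Δ^c} g(x−y) d(μ − emp_N)⊗(μ − emp_N). -/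

import Mathlib

open scoped BigOperators
open MeasureTheory

/-- Interaction energy `E(μ) = ∬ g(x−y) dμ(x)dμ(y)`. -/
noncomputable def energy {α : Type*} [MeasurableSpace α] [Sub α]
    (g : α → ℝ) (μ : Measure α) : ℝ :=
  ∫ p : α × α, g (p.1 - p.2) ∂(μ.prod μ)

/-- Potential `h(μ)(x) = (g ∗ μ)(x) = ∫ g(x−y) dμ(y)`. -/
noncomputable def pot {α : Type*} [MeasurableSpace α] [Sub α]
    (g : α → ℝ) (μ : Measure α) (x : α) : ℝ :=
  ∫ y, g (x - y) ∂μ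

/-- Hamiltonian `H_N(X) = ∑_{i≠j} g(x_i − x_j) + N ∑_i V(x_i)`. -/
noncomputable def Ham {α : Type*} [Sub α] (g V : α → ℝ) (N : ℕ) (X : Fin N → α) : ℝ :=
  (∑ i, ∑ j, if i = j then 0 else g (X i - X j)) + N * ∑ i, V (X i)

/-- `F_N(X, μ) = E^{≠}(μ − emp_N)`, the off-diagonal energy of `μ − (1/N)∑δ_{x_i}`,
expanded as `E(μ) − (2/N)∑_i h(μ)(x_i) + (1/N²)∑_{i≠j} g(x_i−x_j)`. -/
noncomputable def FN {α : Type*} [MeasurableSpace α] [Sub α]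
    (g : α → ℝ) (μ : Measure α) (N : ℕ) (X : Fin N → α) : ℝ :=
  energy g μ - (2 / N) * ∑ i, pot g μ (X i)
    + (1 / (N : ℝ) ^ 2) * ∑ i, ∑ j, if i = j then 0 else g (X i - X j)

/-! Integrating the first-order condition against the probability measure `μ` and using
`∫ h(μ) dμ = E(μ)` (Fubini) pins the constant down as `c_∞ = 2 E(μ) + ∫ V dμ`. With that value
the formula is a rearrangement of finite sums, since `F_N` is already given in expanded form. -/

section Splitting

variable {α : Type*} [MeasurableSpace α] [Sub α] (g V : α → ℝ) (μ : Measure α)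

theorem integral_pot_eq_energy [SFinite μ]
    (hg : Integrable (fun p : α × α => g (p.1 - p.2)) (μ.prod μ)) :
    ∫ x, pot g μ x ∂μ = energy g μ :=
  (integral_prod _ hg).symm

theorem eq_two_mul_energy_add_integral_of_integral_eq_zero [IsProbabilityMeasure μ] {c : ℝ}
    (hg : Integrable (fun p : α × α => g (p.1 - p.2)) (μ.prod μ))
    (hV : Integrable V μ) (hpot : Integrable (pot g μ) μ)
    (hζ : ∫ x, (2 * pot g μ x + V x - c) ∂μ = 0) :
    c = 2 * energy g μ + ∫ x, V x ∂μ := by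
  have hζ_split : ∫ x, (2 * pot g μ x + V x - c) ∂μ
      = 2 * energy g μ + ∫ x, V x ∂μ - c := by
    have h2pot : Integrable (fun x => 2 * pot g μ x) μ := hpot.const_mul 2
    have hsum : Integrable (fun x => 2 * pot g μ x + V x) μ := h2pot.add hV
    rw [integral_sub hsum (integrable_const c), integral_add h2pot hV,
      integral_const_mul, integral_pot_eq_energy g μ hg]
    simp
  linarith

theorem Ham_eq_splitting {N : ℕ} (hN : N ≠ 0) (X : Fin N → α) :
    Ham g V N X = (N : ℝ) ^ 2 * ((energy g μ + ∫ x, V x ∂μ) + FN g μ N X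
      + (1 / N) * ∑ i, (2 * pot g μ (X i) + V (X i) - (2 * energy g μ + ∫ x, V x ∂μ))) := by
  simp only [Ham, FN, Finset.sum_sub_distrib, Finset.sum_add_distrib, Finset.sum_const,
    Finset.card_univ, Fintype.card_fin, nsmul_eq_mul, ← Finset.mul_sum]
  field_simp
  ring

end Splitting

theorem splitting_formula_general
    (d N : ℕ) (hN : 0 < N) (T : ℝ)
    (g V : (Fin d → AddCircle T) → ℝ)
    (μ : Measure (Fin d → AddCircle T)) [IsProbabilityMeasure μ]
    (cEq : ℝ)
    (hg_int : Integrable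
      (fun p : (Fin d → AddCircle T) × (Fin d → AddCircle T) => g (p.1 - p.2)) (μ.prod μ))
    (hV_int : Integrable V μ)
    (hpot_int : Integrable (pot g μ) μ)
    (hζ_zero : ∫ x, (2 * pot g μ x + V x - cEq) ∂μ = 0)
    (X : Fin N → (Fin d → AddCircle T)) :
    Ham g V N X
      = (N : ℝ) ^ 2 * ((energy g μ + ∫ x, V x ∂μ) + FN g μ N X
          + (1 / N) * ∑ i, (2 * pot g μ (X i) + V (X i) - cEq)) := by
  rw [eq_two_mul_energy_add_integral_of_integral_eq_zero g V μ hg_int hV_int hpot_int hζ_zero]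
  exact Ham_eq_splitting g V μ hN.ne' X

/-- Splitting formula: if the equilibrium measure `μ` satisfies the first-order condition
`ζ = 2h(μ) + V − cEq ≥ 0` with `∫ ζ dμ = 0`, then for every pairwise-distinct
configuration `X`, `H_N(X) = N²( E_V(μ) + F_N(X, μ) + ∫ ζ d emp_N )`. -/
theorem splitting_formula
    (d N : ℕ) (hN : 0 < N) (T : ℝ) [Fact (0 < T)]
    (g V : (Fin d → AddCircle T) → ℝ)
    (hgsymm : ∀ x, g (-x) = g x)
    (μ : Measure (Fin d → AddCircle T)) [IsProbabilityMeasure μ]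
    (cEq : ℝ)
    (hg_int : Integrable
      (fun p : (Fin d → AddCircle T) × (Fin d → AddCircle T) => g (p.1 - p.2)) (μ.prod μ))
    (hV_int : Integrable V μ)
    (hpot_int : Integrable (pot g μ) μ)
    (hgx_int : ∀ x, Integrable (fun y => g (x - y)) μ)
    (hζ_nonneg : ∀ x, 0 ≤ 2 * pot g μ x + V x - cEq)
    (hζ_zero : ∫ x, (2 * pot g μ x + V x - cEq) ∂μ = 0)
    (X : Fin N → (Fin d → AddCircle T))
    (hdist : ∀ i j, i ≠ j → X i ≠ X j) :
    Ham g V N X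
      = (N : ℝ) ^ 2 * ((energy g μ + ∫ x, V x ∂μ) + FN g μ N X
          + (1 / N) * ∑ i, (2 * pot g μ (X i) + V (X i) - cEq)) :=
  splitting_formula_general d N hN T g V μ cEq hg_int hV_int hpot_int hζ_zero X
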